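/- arXiv:2310.06573 — 2 statements merged into one kernel-verified Lean document; each statement's English description precedes it below -/
import Mathlib

section
/- For every t ≥ 0, the total ionic content of the electrolyte is conserved: ∫_0^L c_e(x,t) dx = L · c_I. -/
/-!
Each Fourier mode `cos ((2k+1) π x / L)` has zero mean over `[0, L]`, and for `t ≥ 0` the
coefficients `exp (-((2k+1)π/L)² D t) / ((2k+1)² π²)` are dominated by the summable
`1 / ((2k+1)² π²)`, so dominated convergence lets the integral pass through the series.
What remains is the linear profile `c_I + β (L/2 - x)`, whose mean is `c_I`.
-/

open Real

theorem integral_cos_nat_mul_pi_mul_div {n : ℕ} (hn : n ≠ 0) (L : ℝ) :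
    ∫ x in (0 : ℝ)..L, cos (n * π * x / L) = 0 := by
  rcases eq_or_ne L 0 with rfl | hL
  · simp
  have hc : n * π / L ≠ 0 := by positivity
  have hmul (x : ℝ) : n * π * x / L = n * π / L * x := by ring
  simp_rw [hmul]
  rw [intervalIntegral.integral_comp_mul_left cos hc, integral_cos, div_mul_cancel₀ _ hL,
    sin_nat_mul_pi]
  simp

theorem integral_const_add_mul_half_sub (c β L : ℝ) :
    ∫ x in (0 : ℝ)..L, (c + β * (L / 2 - x)) = L * c := by
  have hint : IntervalIntegrable (fun x => β * (L / 2 - x)) MeasureTheory.volume 0 L :=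
    (by fun_prop : Continuous fun x => β * (L / 2 - x)).intervalIntegrable _ _
  -- `x ↦ L/2 - x` maps `[0, L]` onto the symmetric interval `[-L/2, L/2]`.
  rw [intervalIntegral.integral_add intervalIntegrable_const hint,
    intervalIntegral.integral_const_mul, intervalIntegral.integral_comp_sub_left (fun x => x),
    integral_id, intervalIntegral.integral_const, smul_eq_mul]
  ring

theorem summable_one_div_two_mul_add_one_sq :
    Summable fun k : ℕ => 1 / (2 * (k : ℝ) + 1) ^ 2 := by
  have hinj : Function.Injective fun k : ℕ => 2 * k + 1 := fun i j h => by simp_all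
  simpa [Function.comp_def] using (summable_one_div_nat_pow.mpr one_lt_two).comp_injective hinj

theorem Summable.mul_exp_neg {ι : Type*} {u s : ι → ℝ} (hu : Summable u) (hs : ∀ k, 0 ≤ s k) :
    Summable fun k => u k * exp (-s k) :=
  hu.abs.of_norm_bounded fun k => by
    rw [norm_mul, norm_of_nonneg (exp_pos _).le]
    exact mul_le_of_le_one_right (abs_nonneg _) (exp_le_one_iff.mpr (neg_nonpos.mpr (hs k)))

theorem abs_mul_cos_le (c x : ℝ) : |c * cos x| ≤ |c| := by
  simpa [abs_mul] using mul_le_mul_of_nonneg_left (abs_cos_le_one x) (abs_nonneg c)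

section CosineSeries

variable {a : ℕ → ℝ} (n : ℕ → ℕ) (L : ℝ)

theorem continuous_tsum_mul_cos_nat_mul_pi_mul_div (ha : Summable a) :
    Continuous fun x => ∑' k, a k * cos (n k * π * x / L) :=
  continuous_tsum (fun k => by fun_prop) ha.abs fun k x => abs_mul_cos_le _ _

theorem integral_tsum_mul_cos_nat_mul_pi_mul_div (ha : Summable a) (hn : ∀ k, n k ≠ 0) :
    ∫ x in (0 : ℝ)..L, ∑' k, a k * cos (n k * π * x / L) = 0 := by
  have hsum : HasSum (fun k => ∫ x in (0 : ℝ)..L, a k * cos (n k * π * x / L))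
      (∫ x in (0 : ℝ)..L, ∑' k, a k * cos (n k * π * x / L)) :=
    intervalIntegral.hasSum_integral_of_dominated_convergence (fun k _ => |a k|)
      (fun k => (by fun_prop : Continuous _).aestronglyMeasurable)
      (fun k => .of_forall fun x _ => abs_mul_cos_le _ _)
      (.of_forall fun _ _ => ha.abs) intervalIntegrable_const
      (.of_forall fun x _ => (ha.abs.of_norm_bounded fun k => abs_mul_cos_le _ _).hasSum)
  simp only [intervalIntegral.integral_const_mul, integral_cos_nat_mul_pi_mul_div (hn _),
    mul_zero] at hsum
  exact hsum.unique hasSum_zero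

end CosineSeries

theorem stmt_5_general (L D β cI : ℝ) (hD : 0 < D)
    (ce : ℝ × ℝ → ℝ)
    (hce : ∀ x t : ℝ, ce (x, t) =
      cI + β * (L / 2 - x) -
        4 * β * L *
          ∑' k : ℕ, (1 / ((2 * (k : ℝ) + 1) ^ 2 * Real.pi ^ 2)) *
            Real.cos ((2 * (k : ℝ) + 1) * Real.pi * x / L) *
            Real.exp (-(((2 * (k : ℝ) + 1) * Real.pi / L) ^ 2 * D * t))) :
    ∀ t : ℝ, 0 ≤ t → ∫ x in (0 : ℝ)..L, ce (x, t) = L * cI := by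
  intro t ht
  set a : ℕ → ℝ := fun k => 1 / ((2 * (k : ℝ) + 1) ^ 2 * π ^ 2) *
    exp (-(((2 * (k : ℝ) + 1) * π / L) ^ 2 * D * t))
  have ha : Summable a := by
    refine Summable.mul_exp_neg ?_ fun k => by positivity
    simpa only [div_div] using summable_one_div_two_mul_add_one_sq.div_const (π ^ 2)
  have hce_series (x : ℝ) : ce (x, t) = cI + β * (L / 2 - x) -
      4 * β * L * ∑' k, a k * cos (((2 * k + 1 : ℕ) : ℝ) * π * x / L) := by
    rw [hce]
    push_cast
    congr 2
    exact tsum_congr fun k => by ring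
  have hseries_cont := continuous_tsum_mul_cos_nat_mul_pi_mul_div (fun k => 2 * k + 1) L ha
  simp_rw [hce_series]
  rw [intervalIntegral.integral_sub ((by fun_prop : Continuous _).intervalIntegrable _ _)
      ((hseries_cont.const_mul _).intervalIntegrable _ _),
    intervalIntegral.integral_const_mul,
    integral_tsum_mul_cos_nat_mul_pi_mul_div _ _ ha fun k => (2 * k).succ_ne_zero,
    integral_const_add_mul_half_sub]
  ring

/-- For every `t ≥ 0`, the total ionic content of the electrolyte is
conserved: `∫_0^L c_e(x,t) dx = L · c_I`. -/
theorem stmt_5 (L D β cI : ℝ) (hL : 0 < L) (hD : 0 < D)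
    (ce : ℝ × ℝ → ℝ)
    (hce : ∀ x t : ℝ, ce (x, t) =
      cI + β * (L / 2 - x) -
        4 * β * L *
          ∑' k : ℕ, (1 / ((2 * (k : ℝ) + 1) ^ 2 * Real.pi ^ 2)) *
            Real.cos ((2 * (k : ℝ) + 1) * Real.pi * x / L) *
            Real.exp (-(((2 * (k : ℝ) + 1) * Real.pi / L) ^ 2 * D * t))) :
    ∀ t : ℝ, 0 ≤ t → ∫ x in (0 : ℝ)..L, ce (x, t) = L * cI :=
  stmt_5_general L D β cI hD ce hce
end

section
/- For every t > 0, the spatial derivative of c̄ exists at x = 0 and at x = L and satisfies the mixed Neumann boundary conditions ∂c̄/∂x (0,t) = −β (constant inflow flux at the solid–electrolyte interface) and ∂c̄/∂x (L,t) = 0 (no flux at the current collector interface). -/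
/-!
The series in `c̄` is a cosine series `∑ aₙ cos (kₙ x)` with `kₙ = (n + 1)π / L` and
`aₙ = exp (-kₙ² D t) / ((n + 1)² π²)`. For `t > 0` the factor `exp (-kₙ² D t)` makes `∑ aₙ kₙ`
summable, so the series can be differentiated termwise; its derivative `-∑ aₙ kₙ sin (kₙ x)`
vanishes at `x = 0` and `x = L`, where every `sin (kₙ x)` is zero. The boundary fluxes thus come
from the polynomial part alone, whose derivative `-β + β x / L` is `-β` at `0` and `0` at `L`.
-/

open Real

theorem hasDerivAt_tsum_mul_cos {a k : ℕ → ℝ} (ha : Summable a)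
    (hak : Summable fun n => a n * k n) (x : ℝ) :
    HasDerivAt (fun y => ∑' n, a n * cos (k n * y)) (∑' n, -(a n * k n * sin (k n * x))) x := by
  refine hasDerivAt_tsum (g := fun n y => a n * cos (k n * y))
    (g' := fun n y => -(a n * k n * sin (k n * y))) (y₀ := 0) hak.abs (fun n y => ?_)
    (fun n y => ?_) (by simpa using ha) x
  · exact ((((hasDerivAt_id' y).const_mul (k n)).cos).const_mul (a n)).congr_deriv (by ring)
  · rw [norm_neg, norm_mul, norm_eq_abs, norm_eq_abs]
    exact mul_le_of_le_one_right (abs_nonneg _) (abs_sin_le_one _)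

theorem hasDerivAt_tsum_mul_cos_of_sin_eq_zero {a k : ℕ → ℝ} (ha : Summable a)
    (hak : Summable fun n => a n * k n) {x : ℝ} (hx : ∀ n, sin (k n * x) = 0) :
    HasDerivAt (fun y => ∑' n, a n * cos (k n * y)) 0 x := by
  simpa [hx] using hasDerivAt_tsum_mul_cos ha hak x

noncomputable def heatFreq (L : ℝ) (n : ℕ) : ℝ := ((n : ℝ) + 1) * π / L

noncomputable def heatCoeff (L D t : ℝ) (n : ℕ) : ℝ :=
  1 / (((n : ℝ) + 1) ^ 2 * π ^ 2) * exp (-(heatFreq L n ^ 2 * D * t))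

theorem sin_heatFreq_mul_self {L : ℝ} (hL : L ≠ 0) (n : ℕ) : sin (heatFreq L n * L) = 0 := by
  rw [heatFreq, div_mul_cancel₀ _ hL]
  exact_mod_cast sin_nat_mul_pi (n + 1)

theorem summable_exp_neg_heatFreq_sq {L D t : ℝ} (hL : L ≠ 0) (hD : 0 < D) (ht : 0 < t) :
    Summable fun n => exp (-(heatFreq L n ^ 2 * D * t)) := by
  have hc : -((π / L) ^ 2 * D * t) < 0 := neg_neg_of_pos (by have := pi_ne_zero; positivity)
  convert summable_exp_nat_mul_of_ge hc (f := fun n : ℕ => ((n : ℝ) + 1) ^ 2) (fun n => ?_) using 3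
  · rw [heatFreq]; ring
  · nlinarith [(n.cast_nonneg : (0 : ℝ) ≤ n)]

theorem summable_heatCoeff {L D t : ℝ} (hL : L ≠ 0) (hD : 0 < D) (ht : 0 < t) :
    Summable (heatCoeff L D t) := by
  refine ((summable_exp_neg_heatFreq_sq hL hD ht).mul_left (1 / π ^ 2)).of_norm_bounded fun n => ?_
  rw [norm_eq_abs, heatCoeff, abs_of_nonneg (by positivity)]
  gcongr
  have : (1 : ℝ) ≤ ((n : ℝ) + 1) ^ 2 := one_le_pow₀ (by simp)
  nlinarith [pi_pos]

theorem summable_heatCoeff_mul_heatFreq {L D t : ℝ} (hL : 0 < L) (hD : 0 < D) (ht : 0 < t) :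
    Summable fun n => heatCoeff L D t n * heatFreq L n := by
  refine ((summable_exp_neg_heatFreq_sq hL.ne' hD ht).mul_left (1 / (π * L))).of_norm_bounded
    fun n => ?_
  set e := exp (-(heatFreq L n ^ 2 * D * t))
  have hn : (1 : ℝ) ≤ (n : ℝ) + 1 := by simp
  have : heatCoeff L D t n * heatFreq L n = e / (((n : ℝ) + 1) * (π * L)) := by
    show 1 / (((n : ℝ) + 1) ^ 2 * π ^ 2) * e * heatFreq L n = _
    rw [heatFreq]; field_simp
  rw [norm_eq_abs, this, abs_of_nonneg (by positivity), div_le_iff₀ (by positivity)]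
  field_simp
  nlinarith [exp_pos (-(heatFreq L n ^ 2 * D * t))]

theorem hasDerivAt_sub_mul_one_sub_div (c β L x : ℝ) :
    HasDerivAt (fun y => c - β * y * (1 - y / (2 * L))) (-β + β * x / L) x := by
  have h := ((hasDerivAt_id' x).const_mul β).mul (((hasDerivAt_id' x).div_const (2 * L)).const_sub 1)
  refine (h.const_sub c).congr_deriv ?_
  ring

/-- For every `t > 0`, the spatial derivative of the analytical solid-phase
concentration exists at `x = 0` and `x = L` and satisfies the mixed Neumann
boundary conditions `∂c̄/∂x(0,t) = −β` and `∂c̄/∂x(L,t) = 0`. -/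
theorem stmt_8 (L D β cI : ℝ) (hL : 0 < L) (hD : 0 < D)
    (cbar : ℝ × ℝ → ℝ)
    (hcbar : ∀ x t : ℝ, cbar (x, t) =
      cI - β * x * (1 - x / (2 * L)) + β * D * t / L +
        2 * β * L * (1 / 6 -
          ∑' n : ℕ, (1 / (((n : ℝ) + 1) ^ 2 * Real.pi ^ 2)) *
            Real.cos (((n : ℝ) + 1) * Real.pi * x / L) *
            Real.exp (-((((n : ℝ) + 1) * Real.pi / L) ^ 2 * D * t))) ) :
    ∀ t : ℝ, 0 < t →
      HasDerivAt (fun y : ℝ => cbar (y, t)) (-β) 0 ∧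
      HasDerivAt (fun y : ℝ => cbar (y, t)) 0 L := by
  intro t ht
  have hcbar_modes : (fun y => cbar (y, t)) = fun y => cI - β * y * (1 - y / (2 * L)) +
      β * D * t / L + 2 * β * L * (1 / 6 - ∑' n, heatCoeff L D t n * cos (heatFreq L n * y)) := by
    funext y
    rw [hcbar]
    congr! 5 with n
    rw [heatCoeff, heatFreq, mul_div_right_comm]
    ring
  have hderiv (x : ℝ) (hx : ∀ n, sin (heatFreq L n * x) = 0) :
      HasDerivAt (fun y => cbar (y, t)) (-β + β * x / L) x := by
    have hmodes := hasDerivAt_tsum_mul_cos_of_sin_eq_zero (summable_heatCoeff hL.ne' hD ht)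
      (summable_heatCoeff_mul_heatFreq hL hD ht) hx
    rw [hcbar_modes]
    exact (((hasDerivAt_sub_mul_one_sub_div cI β L x).add_const _).add
      ((hmodes.const_sub _).const_mul _)).congr_deriv (by ring)
  constructor
  · simpa using hderiv 0 (by simp)
  · simpa [hL.ne'] using hderiv L (sin_heatFreq_mul_self hL.ne')
end
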